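/- For each e ∈ {0, 1, …, N−1}, the interleaved sequence S^e has the balance property: the number of indices n with 0 ≤ n ≤ 2N−1 and s^e_n = 0 equals N, and the number of indices n with 0 ≤ n ≤ 2N−1 and s^e_n = 1 equals N. -/

import Mathlib

/-- The geometric sequence of the first type: `t¹ₙ = 1` iff the Legendre symbol of
`Tr(ω^n)` is `-1`, and `0` otherwise (i.e. when the symbol is `0` or `1`). -/
noncomputable def ntuT1 (p : ℕ) [Fact p.Prime] {F : Type} [Field F]
    [Algebra (ZMod p) F] (ω : F) (n : ℕ) : ZMod 2 :=
  if legendreSym p ((Algebra.trace (ZMod p) F (ω ^ n)).val : ℤ) = -1 then 1 else 0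

/-- The geometric sequence of the second type: `t²ₙ = 0` iff the Legendre symbol of
`Tr(ω^n)` is `1`, and `1` otherwise (i.e. when the symbol is `0` or `-1`). -/
noncomputable def ntuT2 (p : ℕ) [Fact p.Prime] {F : Type} [Field F]
    [Algebra (ZMod p) F] (ω : F) (n : ℕ) : ZMod 2 :=
  if legendreSym p ((Algebra.trace (ZMod p) F (ω ^ n)).val : ℤ) = 1 then 0 else 1

/-- Periodic cross-correlation at shift `τ` of two `N`-periodic binary sequences:
`R_{s,s'}(τ) = Σ_{i=0}^{N-1} (-1)^{s_i + s'_{i+τ}}`, indices taken modulo `N`. -/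
def pcorr (N : ℕ) (s s' : ℕ → ZMod 2) (τ : ℤ) : ℤ :=
  ∑ i ∈ Finset.range N, (-1 : ℤ) ^ ((s i + s' ((((i : ℤ) + τ) % (N : ℤ)).toNat)).val)

/-- The interleaved sequence of `t` and the left shift by `e` of `u`:
`n = 2j ↦ t j`, `n = 2j+1 ↦ u (j + e)`. -/
def ntuInterleave (t u : ℕ → ZMod 2) (e : ℕ) (n : ℕ) : ZMod 2 :=
  if n % 2 = 0 then t (n / 2) else u (n / 2 + e)


/-!
Put `k = (p^m - 1)/(p - 1)`, so `N = 2k`. The norm of `ω` to `𝔽_p` is `ω^k`, an element of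
order `p - 1`, i.e. a generator of `𝔽_p^×` and hence a non-square. By `𝔽_p`-linearity of the
trace, `χ(Tr(ω^(n+k))) = -χ(Tr(ω^n))` for the quadratic character `χ`, so `t²_{n+k} = t¹_n + 1`
and `t²` is `N`-periodic. Over one period the even positions of `S^e` then take the value `v`
exactly `#{j < N | t¹_j = v}` times and the odd positions exactly `#{j < N | t¹_j = v + 1}` times,
which adds up to `N`.
-/

open Finset Function

theorem card_filter_range_two_mul_ntuInterleave (t u : ℕ → ZMod 2) (e : ℕ) (v : ZMod 2)
    (N : ℕ) :
    #{n ∈ range (2 * N) | ntuInterleave t u e n = v} =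
      #{j ∈ range N | t j = v} + #{j ∈ range N | u (j + e) = v} := by
  simp only [card_filter]
  induction N with
  | zero => simp
  | succ N ih =>
    rw [show 2 * (N + 1) = 2 * N + 1 + 1 by ring, sum_range_succ, sum_range_succ, ih,
      sum_range_succ, sum_range_succ]
    have heven : ntuInterleave t u e (2 * N) = t N := by simp [ntuInterleave]
    have hodd : ntuInterleave t u e (2 * N + 1) = u (N + e) := by
      simp [ntuInterleave, Nat.add_mod, show (2 * N + 1) / 2 = N by omega]
    rw [heven, hodd]
    ring

theorem card_filter_range_add_of_periodic {α : Type*} [DecidableEq α] {u : ℕ → α} {N : ℕ}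
    (hu : Periodic u N) (e : ℕ) (v : α) :
    #{j ∈ range N | u (j + e) = v} = #{j ∈ range N | u j = v} := by
  have hIco : (range N).map (addRightEmbedding e) = Ico e (e + N) := by
    rw [range_eq_Ico, map_add_right_Ico, zero_add, add_comm]
  rw [← Nat.count_eq_card_filter_range (u · = v),
    ← Nat.filter_Ico_card_eq_of_periodic e N (u · = v) (hu.comp (· = v)), ← hIco, filter_map,
    card_map]
  rfl

theorem card_filter_ntuInterleave_eq {t u : ℕ → ZMod 2} {N k : ℕ} (hu : Periodic u N)
    (hut : ∀ j, u (j + k) = t j + 1) (e : ℕ) (v : ZMod 2) :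
    #{n ∈ range (2 * N) | ntuInterleave t u e n = v} = N := by
  have hflip : ∀ x : ZMod 2, x + 1 = v ↔ ¬x = v := by revert v; decide
  rw [card_filter_range_two_mul_ntuInterleave, card_filter_range_add_of_periodic hu,
    ← card_filter_range_add_of_periodic hu k]
  simp only [hut, hflip]
  rw [card_filter_add_card_filter_not, card_range]

section FiniteField

variable {K F : Type*} [Field K] [Fintype K] [DecidableEq K] [Field F] [Fintype F]
  [Algebra K F]

theorem quadraticChar_norm_eq_neg_one_of_orderOf_eq (hK : ringChar K ≠ 2) {ω : F}
    (hω : orderOf ω = Fintype.card F - 1) : quadraticChar K (Algebra.norm K ω) = -1 := by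
  set q := Fintype.card K
  set k := (Fintype.card F - 1) / (q - 1)
  have hnorm : algebraMap K F (Algebra.norm K ω) = ω ^ k := by
    simpa using FiniteField.algebraMap_norm_eq_pow (K := K) (x := ω)
  have hk : k * (q - 1) = Fintype.card F - 1 := by
    refine Nat.div_mul_cancel ?_
    simpa [Module.card_eq_pow_finrank (K := K) (V := F)] using Nat.sub_dvd_pow_sub_pow q 1 _
  have hq := FiniteField.odd_card_of_char_ne_two hK
  have hq1 : 1 < q := Fintype.one_lt_card
  have hF1 : 1 < Fintype.card F := Fintype.one_lt_card
  have hk0 : 0 < k := Nat.pos_of_ne_zero (by rintro h; rw [h] at hk; omega)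
  have hω0 : ω ≠ 0 := by
    rintro rfl
    rw [orderOf_eq_zero_iff'.mpr (fun n hn => by simp [hn.ne'])] at hω
    omega
  rw [quadraticChar_eq_pow_of_char_ne_two hK (Algebra.norm_ne_zero_iff.mpr hω0), if_neg]
  intro h
  apply_fun algebraMap K F at h
  rw [map_pow, hnorm, ← pow_mul, map_one] at h
  refine pow_ne_one_of_lt_orderOf (Nat.mul_pos hk0 (by omega)).ne' ?_ h
  rw [hω, ← hk]
  exact Nat.mul_lt_mul_of_pos_left (by omega) hk0

variable (K) in
noncomputable def traceChar (ω : F) (n : ℕ) : ℤ := quadraticChar K (Algebra.trace K F (ω ^ n))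

theorem traceChar_antiperiodic (hK : ringChar K ≠ 2) {ω : F}
    (hω : orderOf ω = Fintype.card F - 1) :
    Antiperiodic (traceChar K ω) ((Fintype.card F - 1) / (Fintype.card K - 1)) := by
  intro n
  have hshift : ω ^ (n + (Fintype.card F - 1) / (Fintype.card K - 1)) =
      Algebra.norm K ω • ω ^ n := by
    rw [Algebra.smul_def, FiniteField.algebraMap_norm_eq_pow, pow_add, mul_comm]
    simp
  simp only [traceChar, hshift, map_smul, smul_eq_mul, map_mul,
    quadraticChar_norm_eq_neg_one_of_orderOf_eq hK hω, neg_one_mul]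

end FiniteField

section Legendre

variable (p : ℕ) [Fact p.Prime] {F : Type} [Field F] [Algebra (ZMod p) F] (ω : F)

theorem legendreSym_val (x : ZMod p) : legendreSym p (x.val : ℤ) = quadraticChar (ZMod p) x := by
  rw [legendreSym]
  norm_cast
  rw [ZMod.natCast_val, ZMod.cast_id]

theorem ntuT1_eq_comp_traceChar :
    ntuT1 p ω = (fun c : ℤ => if c = -1 then (1 : ZMod 2) else 0) ∘ traceChar (ZMod p) ω := by
  ext n
  simp only [ntuT1, traceChar, comp_apply, legendreSym_val]
  -- the two sides differ only in the `Decidable` instance of the `if`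
  congr

theorem ntuT2_eq_comp_traceChar :
    ntuT2 p ω = (fun c : ℤ => if c = 1 then (0 : ZMod 2) else 1) ∘ traceChar (ZMod p) ω := by
  ext n
  simp only [ntuT2, traceChar, comp_apply, legendreSym_val]
  congr

theorem ntuT2_add_of_antiperiodic {k : ℕ} (hk : Antiperiodic (traceChar (ZMod p) ω) k) (j : ℕ) :
    ntuT2 p ω (j + k) = ntuT1 p ω j + 1 := by
  rw [ntuT1_eq_comp_traceChar, ntuT2_eq_comp_traceChar]
  simp only [comp_apply, hk j]
  rcases quadraticChar_isQuadratic (ZMod p) (Algebra.trace (ZMod p) F (ω ^ j)) with h | h | h <;>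
    simp [traceChar, h, show (1 + 1 : ZMod 2) = 0 from rfl]

end Legendre

theorem stmt10_general (p m : ℕ) [Fact p.Prime] (hp2 : p ≠ 2)
    (F : Type) [Field F] [Fintype F] [Algebra (ZMod p) F]
    (hcard : Fintype.card F = p ^ m) (ω : F) (hω : orderOf ω = p ^ m - 1)
    (N : ℕ) (hN : N = 2 * (p ^ m - 1) / (p - 1)) (e : ℕ) :
    ((Finset.range (2 * N)).filter (fun n => ntuInterleave (ntuT1 p ω) (ntuT2 p ω) e n = 0)).card = N
    ∧ ((Finset.range (2 * N)).filter (fun n => ntuInterleave (ntuT1 p ω) (ntuT2 p ω) e n = 1)).card = N := by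
  have hchar : ringChar (ZMod p) ≠ 2 := by rwa [ZMod.ringChar_zmod_n]
  have hanti := traceChar_antiperiodic hchar (hω.trans (congrArg (· - 1) hcard).symm)
  rw [hcard, ZMod.card] at hanti
  have hN2 : N = 2 * ((p ^ m - 1) / (p - 1)) := by
    rw [hN, Nat.mul_div_assoc 2 (by simpa using Nat.sub_dvd_pow_sub_pow p 1 m)]
  have hperiodic : Periodic (ntuT2 p ω) N := by
    rw [ntuT2_eq_comp_traceChar, hN2]
    exact hanti.periodic_two_mul.comp _
  exact ⟨card_filter_ntuInterleave_eq hperiodic (ntuT2_add_of_antiperiodic p ω hanti) e 0,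
    card_filter_ntuInterleave_eq hperiodic (ntuT2_add_of_antiperiodic p ω hanti) e 1⟩

theorem stmt10 (p m : ℕ) [Fact p.Prime] (hp2 : p ≠ 2) (hm : 1 < m)
    (F : Type) [Field F] [Fintype F] [Algebra (ZMod p) F]
    (hcard : Fintype.card F = p ^ m) (ω : F) (hω : orderOf ω = p ^ m - 1)
    (N : ℕ) (hN : N = 2 * (p ^ m - 1) / (p - 1)) (e : ℕ) (he : e < N) :
    ((Finset.range (2 * N)).filter (fun n => ntuInterleave (ntuT1 p ω) (ntuT2 p ω) e n = 0)).card = N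
    ∧ ((Finset.range (2 * N)).filter (fun n => ntuInterleave (ntuT1 p ω) (ntuT2 p ω) e n = 1)).card = N :=
  stmt10_general p m hp2 F hcard ω hω N hN e
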